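/- arXiv:2407.19198 — 5 statements merged into one kernel-verified Lean document; each statement's English description precedes it below -/
import Mathlib

section
/- Let v, v_and, v_or : 𝒫(N) → ℝ satisfy v(S) = v_and(S) + v_or(S) for every S ⊆ N. Then for every S ⊆ N, v(S) = v(∅) + ∑_{∅ ≠ T ⊆ S} I_and(T | v_and) + ∑_{T ⊆ N, T ∩ S ≠ ∅} I_or(T | v_or). (Universal matching property of AND-OR interactions: the network output on any masked sample equals the baseline output plus the effects of all triggered AND interactions and all triggered OR interactions.) -/
open Finset BigOperators

/-- The AND (Harsanyi) interaction of a subset `S`, extracted from the masked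
outputs `u : Finset ι → ℝ`. -/
noncomputable def Iand {ι : Type*} [DecidableEq ι] (u : Finset ι → ℝ) (S : Finset ι) : ℝ :=
  ∑ T ∈ S.powerset, (-1 : ℝ) ^ (S.card - T.card) * u T

/-- The OR interaction of a subset `S`, extracted from the masked outputs
`u : Finset ι → ℝ`. -/
noncomputable def Ior {ι : Type*} [Fintype ι] [DecidableEq ι]
    (u : Finset ι → ℝ) (S : Finset ι) : ℝ :=
  -∑ T ∈ S.powerset, (-1 : ℝ) ^ (S.card - T.card) * u (Finset.univ \ T)

/-- Möbius inversion: the sum of all AND interactions inside `S` recovers `u S`. -/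
lemma sum_Iand_powerset {ι : Type*} [DecidableEq ι] (u : Finset ι → ℝ) (S : Finset ι) :
    ∑ T ∈ S.powerset, Iand u T = u S := by
  unfold Iand
  rw [Finset.sum_comm' (t' := S.powerset) (s' := fun L => S.powerset.filter (L ⊆ ·))
    (fun T L => by
      simp only [mem_powerset, mem_filter]
      constructor
      · rintro ⟨h1, h2⟩; exact ⟨⟨h1, h2⟩, h2.trans h1⟩
      · rintro ⟨⟨h1, h2⟩, h3⟩; exact ⟨h1, h2⟩)]
  have key : ∀ L ∈ S.powerset,
      ∑ T ∈ S.powerset.filter (L ⊆ ·), (-1:ℝ) ^ (T.card - L.card) * u L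
        = if S = L then u L else 0 := by
    intro L hL
    rw [mem_powerset] at hL
    rw [← Finset.sum_mul]
    have h1 : ∑ T ∈ S.powerset.filter (L ⊆ ·), (-1:ℝ) ^ (T.card - L.card)
        = ∑ M ∈ (S \ L).powerset, (-1:ℝ) ^ M.card := by
      apply Finset.sum_nbij' (fun T => T \ L) (fun M => M ∪ L)
      · intro T hT
        simp only [mem_powerset, mem_filter] at *
        exact sdiff_subset_sdiff hT.1 le_rfl
      · intro M hM
        simp only [mem_powerset, mem_filter] at *
        exact ⟨union_subset (hM.trans sdiff_subset) hL, subset_union_right⟩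
      · intro T hT
        simp only [mem_filter] at hT
        exact sdiff_union_of_subset hT.2
      · intro M hM
        simp only [mem_powerset] at hM
        have hd : Disjoint M L :=
          (Finset.sdiff_disjoint : Disjoint (S \ L) L).mono_left hM
        rw [union_sdiff_right, Finset.sdiff_eq_self_iff_disjoint.mpr hd]
      · intro T hT
        simp only [mem_filter] at hT
        rw [card_sdiff_of_subset hT.2]
    have h2 : ∑ M ∈ (S \ L).powerset, (-1:ℝ) ^ M.card = if S \ L = ∅ then 1 else 0 := by
      exact_mod_cast Finset.sum_powerset_neg_one_pow_card (x := S \ L)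
    rw [h1, h2]
    by_cases h : S = L
    · subst h; simp
    · have : ¬ S \ L = ∅ := by
        intro he
        exact h (le_antisymm (sdiff_eq_empty_iff_subset.mp he) hL)
      simp [this, h]
  rw [Finset.sum_congr rfl key, Finset.sum_ite_eq S.powerset S u]
  simp

lemma Iand_empty {ι : Type*} [DecidableEq ι] (u : Finset ι → ℝ) : Iand u ∅ = u ∅ := by
  simp [Iand]

lemma sum_Iand_filter {ι : Type*} [DecidableEq ι] (u : Finset ι → ℝ) (S : Finset ι) :
    ∑ T ∈ S.powerset.filter (fun T => T ≠ ∅), Iand u T = u S - u ∅ := by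
  have h := Finset.sum_filter_add_sum_filter_not S.powerset (fun T => T ≠ ∅) (Iand u)
  have he : S.powerset.filter (fun T => ¬ T ≠ ∅) = {∅} := by
    ext T
    simp only [mem_filter, mem_powerset, mem_singleton, not_not]
    exact ⟨fun h => h.2, fun h => ⟨h ▸ empty_subset S, h⟩⟩
  rw [he, sum_singleton, Iand_empty, sum_Iand_powerset] at h
  linarith

lemma Ior_eq {ι : Type*} [Fintype ι] [DecidableEq ι] (u : Finset ι → ℝ) (T : Finset ι) :
    Ior u T = - Iand (fun L => u (Finset.univ \ L)) T := rfl

lemma sum_Ior_filter {ι : Type*} [Fintype ι] [DecidableEq ι] (u : Finset ι → ℝ) (S : Finset ι) :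
    ∑ T ∈ (Finset.univ : Finset (Finset ι)).filter (fun T => (T ∩ S).Nonempty), Ior u T
      = u S - u ∅ := by
  let w : Finset ι → ℝ := fun L => u (Finset.univ \ L)
  have e : ∀ T, Ior u T = - Iand w T := fun T => rfl
  have h := Finset.sum_filter_add_sum_filter_not (Finset.univ : Finset (Finset ι))
    (fun T => (T ∩ S).Nonempty) (Ior u)
  have htot : ∑ T ∈ (Finset.univ : Finset (Finset ι)), Ior u T = - u ∅ := by
    have hm := sum_Iand_powerset w (Finset.univ : Finset ι)
    rw [Finset.powerset_univ] at hm
    rw [Finset.sum_congr rfl (fun T _ => e T), Finset.sum_neg_distrib, hm]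
    show - u (Finset.univ \ Finset.univ) = - u ∅
    simp
  have hun : (Finset.univ : Finset (Finset ι)).filter (fun T => ¬ (T ∩ S).Nonempty)
      = (Finset.univ \ S).powerset := by
    ext T
    simp only [mem_filter, mem_univ, true_and, mem_powerset, Finset.not_nonempty_iff_eq_empty,
      ← Finset.disjoint_iff_inter_eq_empty, Finset.subset_sdiff]
    exact ⟨fun h => ⟨subset_univ T, h⟩, fun h => h.2⟩
  have hcompl : ∑ T ∈ (Finset.univ : Finset (Finset ι)).filter (fun T => ¬ (T ∩ S).Nonempty),
      Ior u T = - u S := by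
    rw [hun]
    have hm := sum_Iand_powerset w (Finset.univ \ S)
    rw [Finset.sum_congr rfl (fun T _ => e T), Finset.sum_neg_distrib, hm]
    show - u (Finset.univ \ (Finset.univ \ S)) = - u S
    rw [Finset.sdiff_sdiff_eq_self (Finset.subset_univ S)]
  rw [htot] at h
  linarith [h, hcompl]

/-- Universal matching property of AND-OR interactions: if the network output
decomposes as `v = v_and + v_or`, then the output on any masked sample `x_S`
equals the baseline output `v(∅)` plus the effects of all triggered AND
interactions (`∅ ≠ T ⊆ S`) and all triggered OR interactions (`T ∩ S ≠ ∅`). -/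
theorem universal_matching_and_or {ι : Type*} [Fintype ι] [DecidableEq ι]
    (v vand vor : Finset ι → ℝ)
    (hdecomp : ∀ S : Finset ι, v S = vand S + vor S) :
    ∀ S : Finset ι,
      v S = v ∅
        + ∑ T ∈ S.powerset.filter (fun T => T ≠ ∅), Iand vand T
        + ∑ T ∈ (Finset.univ : Finset (Finset ι)).filter (fun T => (T ∩ S).Nonempty),
            Ior vor T := by
  intro S
  rw [sum_Iand_filter, sum_Ior_filter, hdecomp S, hdecomp ∅]
  ring
end

section
/- For every function v_or : 𝒫(N) → ℝ and every S ⊆ N, ∑_{T ⊆ N, T ∩ S ≠ ∅} I_or(T | v_or) = v_or(S) − v_or(∅). (Universal matching property of OR interactions: the sum of all OR interactions triggered by the masked sample x_S, i.e., those with T ∩ S ≠ ∅, equals v_or(S) − v_or(∅).) -/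
open Finset BigOperators


lemma negOnePowSub {m n : ℕ} (h : m ≤ n) : (-1 : ℝ) ^ (n - m) = (-1) ^ n * (-1) ^ m := by
  obtain ⟨k, rfl⟩ := Nat.exists_eq_add_of_le h
  have hm : (-1 : ℝ) ^ m * (-1) ^ m = 1 := by
    rw [← pow_add]; exact Even.neg_one_pow ⟨m, rfl⟩
  rw [Nat.add_sub_cancel_left, pow_add]
  rw [mul_comm ((-1 : ℝ) ^ m) ((-1 : ℝ) ^ k), mul_assoc, hm, mul_one]

lemma sumPowNegOneReal {ι : Type*} [DecidableEq ι] (x : Finset ι) :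
    ∑ m ∈ x.powerset, (-1 : ℝ) ^ m.card = if x = ∅ then 1 else 0 := by
  have h := Finset.sum_powerset_neg_one_pow_card (x := x)
  have : ∑ m ∈ x.powerset, (-1 : ℝ) ^ m.card
      = ((∑ m ∈ x.powerset, (-1 : ℤ) ^ m.card : ℤ) : ℝ) := by push_cast; rfl
  rw [this, h]; split <;> simp

lemma innerSumAux {ι : Type*} [DecidableEq ι] (A R : Finset ι) (hAR : A ⊆ R) :
    ∑ T ∈ R.powerset.filter (fun T => A ⊆ T), (-1 : ℝ) ^ T.card
      = if A = R then (-1 : ℝ) ^ A.card else 0 := by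
  rw [Finset.sum_nbij' (i := fun T => T \ A) (j := fun B => A ∪ B)
    (t := (R \ A).powerset) (g := fun B => (-1 : ℝ) ^ (A ∪ B).card)]
  · calc ∑ B ∈ (R \ A).powerset, (-1 : ℝ) ^ (A ∪ B).card
        = ∑ B ∈ (R \ A).powerset, (-1 : ℝ) ^ A.card * (-1) ^ B.card := by
          refine Finset.sum_congr rfl fun B hB => ?_
          rw [mem_powerset] at hB
          rw [card_union_of_disjoint, pow_add]
          exact disjoint_sdiff.mono_right hB
      _ = (-1 : ℝ) ^ A.card * ∑ B ∈ (R \ A).powerset, (-1 : ℝ) ^ B.card := by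
          rw [mul_sum]
      _ = _ := by
          rw [sumPowNegOneReal]
          by_cases h : A = R
          · simp [h]
          · have : R \ A ≠ ∅ := fun he => h (hAR.antisymm (sdiff_eq_empty_iff_subset.mp he))
            simp [this, h]
  · intro T hT
    rw [mem_filter, mem_powerset] at hT
    rw [mem_powerset]
    exact sdiff_subset_sdiff hT.1 le_rfl
  · intro B hB
    rw [mem_powerset] at hB
    rw [mem_filter, mem_powerset]
    exact ⟨union_subset hAR (hB.trans sdiff_subset), subset_union_left⟩
  · intro T hT
    rw [mem_filter] at hT
    exact union_sdiff_of_subset hT.2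
  · intro B hB
    rw [mem_powerset] at hB
    exact union_sdiff_cancel_left (disjoint_sdiff.mono_right hB)
  · intro T hT
    rw [mem_filter] at hT
    rw [union_sdiff_of_subset hT.2]

lemma sum_Ior_powerset {ι : Type*} [Fintype ι] [DecidableEq ι]
    (u : Finset ι → ℝ) (R : Finset ι) :
    ∑ T ∈ R.powerset, Ior u T = -u (Finset.univ \ R) := by
  calc ∑ T ∈ R.powerset, Ior u T
      = ∑ T ∈ R.powerset, ∑ A ∈ T.powerset,
          -((-1 : ℝ) ^ T.card * ((-1) ^ A.card * u (Finset.univ \ A))) := by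
        refine Finset.sum_congr rfl fun T _ => ?_
        rw [Ior, ← Finset.sum_neg_distrib]
        refine Finset.sum_congr rfl fun A hA => ?_
        rw [negOnePowSub (card_le_card (mem_powerset.mp hA))]
        ring
    _ = ∑ A ∈ R.powerset, ∑ T ∈ R.powerset.filter (fun T => A ⊆ T),
          -((-1 : ℝ) ^ T.card * ((-1) ^ A.card * u (Finset.univ \ A))) := by
        refine Finset.sum_comm' fun T A => ?_
        simp only [mem_powerset, mem_filter]
        constructor
        · rintro ⟨h1, h2⟩; exact ⟨⟨h1, h2⟩, h2.trans h1⟩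
        · rintro ⟨⟨h1, h2⟩, _⟩; exact ⟨h1, h2⟩
    _ = ∑ A ∈ R.powerset, -(((-1 : ℝ) ^ A.card * u (Finset.univ \ A)) *
          ∑ T ∈ R.powerset.filter (fun T => A ⊆ T), (-1 : ℝ) ^ T.card) := by
        refine Finset.sum_congr rfl fun A _ => ?_
        rw [Finset.mul_sum, ← Finset.sum_neg_distrib]
        exact Finset.sum_congr rfl fun T _ => by ring
    _ = ∑ A ∈ R.powerset, (if A = R then
          -(((-1 : ℝ) ^ A.card * u (Finset.univ \ A)) * (-1) ^ A.card) else 0) := by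
        refine Finset.sum_congr rfl fun A hA => ?_
        rw [innerSumAux A R (mem_powerset.mp hA)]
        split <;> simp
    _ = -u (Finset.univ \ R) := by
        rw [Finset.sum_ite_eq' R.powerset R]
        have : ((-1 : ℝ) ^ R.card) * ((-1) ^ R.card) = 1 := by
          rw [← pow_add]; exact Even.neg_one_pow ⟨R.card, rfl⟩
        simp only [if_pos (mem_powerset_self R)]
        linear_combination (-u (Finset.univ \ R)) * this

/-- Universal matching property of OR interactions: the sum of all OR interactions
triggered by the masked sample `x_S` (i.e. those with `T ∩ S ≠ ∅`) equals
`v_or(S) - v_or(∅)`. -/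
theorem universal_matching_or {ι : Type*} [Fintype ι] [DecidableEq ι]
    (vor : Finset ι → ℝ) (S : Finset ι) :
    ∑ T ∈ (Finset.univ : Finset (Finset ι)).filter (fun T => (T ∩ S).Nonempty), Ior vor T
      = vor S - vor ∅ := by
  have hsplit := Finset.sum_filter_add_sum_filter_not (Finset.univ : Finset (Finset ι))
    (fun T => (T ∩ S).Nonempty) (Ior vor)
  have hall : ∑ T ∈ (Finset.univ : Finset (Finset ι)), Ior vor T = -vor ∅ := by
    have h := sum_Ior_powerset vor (Finset.univ : Finset ι)
    rw [Finset.powerset_univ] at h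
    simpa using h
  have hcompl : ∑ T ∈ (Finset.univ : Finset (Finset ι)).filter
      (fun T => ¬(T ∩ S).Nonempty), Ior vor T = -vor S := by
    have hset : (Finset.univ : Finset (Finset ι)).filter (fun T => ¬(T ∩ S).Nonempty)
        = (Finset.univ \ S).powerset := by
      ext T
      simp [mem_powerset, Finset.not_nonempty_iff_eq_empty, subset_sdiff,
        ← Finset.disjoint_iff_inter_eq_empty, disjoint_comm]
    rw [hset, sum_Ior_powerset]
    congr 1
    simp [Finset.sdiff_sdiff_self_left]
  linarith [hsplit, hall, hcompl]
end

section
/- Let σ² > 0 and let M̂ = (JᵀJ + 2ⁿ diag(c))⁻¹ JᵀJ with c_T = 2^{|T|} σ². If T, T' ⊆ N satisfy |T| = |T'|, then the rows of M̂ indexed by T and by T' have equal Euclidean norms: ‖m̂_T‖₂ = ‖m̂_{T'}‖₂. (In fact, m̂_T is a permutation of m̂_{T'}.) -/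
open Matrix Finset BigOperators

/-- The `2^n × 2^n` interaction-triggering matrix, with rows and columns indexed by
the subsets of `N = {1,…,n}`: `J S T = 1` if `T ⊆ S` and `0` otherwise. -/
noncomputable def Jmat (n : ℕ) : Matrix (Finset (Fin n)) (Finset (Fin n)) ℝ :=
  fun S T => if T ⊆ S then 1 else 0

/-- `M̂(σ²) = (JᵀJ + 2ⁿ diag(c))⁻¹ JᵀJ` with `c_T = 2^{|T|} σ²`. -/
noncomputable def Mhat (n : ℕ) (σ2 : ℝ) :
    Matrix (Finset (Fin n)) (Finset (Fin n)) ℝ :=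
  ((Jmat n)ᵀ * Jmat n
      + (2 ^ n : ℝ) • Matrix.diagonal (fun T : Finset (Fin n) => 2 ^ T.card * σ2))⁻¹
    * ((Jmat n)ᵀ * Jmat n)

/-!
Relabelling the elements of `N` by a permutation `e` permutes the subsets of `N`, preserves
inclusion and cardinality, and hence fixes `J`, `diag(c)` and therefore `M̂`. So
`M̂ (e T) (e S) = M̂ T S`, i.e. the row indexed by `e T` is a permutation of the row indexed by
`T`, and any two subsets of the same order are related by such an `e`.
-/

open Equiv

theorem Finset.exists_perm_finsetCongr_eq_of_card_eq {α : Type*} [DecidableEq α]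
    {s t : Finset α} (h : s.card = t.card) : ∃ e : Perm α, e.finsetCongr s = t := by
  obtain ⟨e, he⟩ := (Set.powersetCard.isPretransitive (α := α) (n := t.card)).exists_smul_eq
    ⟨s, h⟩ ⟨t, rfl⟩
  refine ⟨e, ?_⟩
  simpa [Finset.smul_finset_def, Finset.map_eq_image, Subtype.ext_iff] using he

theorem Matrix.sum_apply_row_eq_of_submatrix_eq {ι R M : Type*} [Fintype ι] [AddCommMonoid M]
    {A : Matrix ι ι R} {σ : Perm ι} (hA : A.submatrix σ σ = A) (f : R → M) (i : ι) :
    ∑ j, f (A (σ i) j) = ∑ j, f (A i j) := by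
  rw [← Equiv.sum_comp σ]
  exact Finset.sum_congr rfl fun j _ => congrArg f (congrFun₂ hA i j)

theorem Jmat_submatrix_finsetCongr (n : ℕ) (e : Perm (Fin n)) :
    (Jmat n).submatrix e.finsetCongr e.finsetCongr = Jmat n := by
  ext S T
  simp [Jmat]

theorem Mhat_submatrix_finsetCongr (n : ℕ) (σ2 : ℝ) (e : Perm (Fin n)) :
    (Mhat n σ2).submatrix e.finsetCongr e.finsetCongr = Mhat n σ2 := by
  have hJJ : ((Jmat n)ᵀ * Jmat n).submatrix e.finsetCongr e.finsetCongr = (Jmat n)ᵀ * Jmat n := by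
    rw [← submatrix_mul_equiv _ _ _ e.finsetCongr, ← transpose_submatrix,
      Jmat_submatrix_finsetCongr]
  have hD : (diagonal fun T : Finset (Fin n) => (2 : ℝ) ^ T.card * σ2).submatrix
      e.finsetCongr e.finsetCongr = diagonal fun T => 2 ^ T.card * σ2 := by
    rw [submatrix_diagonal_equiv]
    congr 1
    funext T
    simp
  rw [Mhat, ← submatrix_mul_equiv _ _ _ e.finsetCongr, ← inv_submatrix_equiv]
  simp only [submatrix_add, submatrix_smul, Pi.add_apply, Pi.smul_apply, hD, hJJ]

theorem mhat_rows_same_order_same_norm_general (n : ℕ) (σ2 : ℝ)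
    (T T' : Finset (Fin n)) (hcard : T.card = T'.card) :
    Real.sqrt (∑ S : Finset (Fin n), Mhat n σ2 T S ^ 2)
      = Real.sqrt (∑ S : Finset (Fin n), Mhat n σ2 T' S ^ 2) := by
  obtain ⟨e, rfl⟩ := Finset.exists_perm_finsetCongr_eq_of_card_eq hcard
  rw [sum_apply_row_eq_of_submatrix_eq (Mhat_submatrix_finsetCongr n σ2 e) (· ^ 2)]

/-- Rows of `M̂` indexed by subsets of the same order have equal Euclidean norms. -/
theorem mhat_rows_same_order_same_norm (n : ℕ) (hn : 1 ≤ n) (σ2 : ℝ) (hσ : 0 < σ2)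
    (T T' : Finset (Fin n)) (hcard : T.card = T'.card) :
    Real.sqrt (∑ S : Finset (Fin n), Mhat n σ2 T S ^ 2)
      = Real.sqrt (∑ S : Finset (Fin n), Mhat n σ2 T' S ^ 2) :=
  mhat_rows_same_order_same_norm_general n σ2 T T' hcard
end

section
/- For every T ⊆ N, the AND interaction satisfies I_and(T) = ∑_{d ∈ ℕⁿ : support(d) = T} q_d · ∏_{i ∈ T} (x̂_i − b_i)^{d_i}, where support(d) = {i : d_i > 0} and q_d is the coefficient of the monomial of multi-degree d in the Taylor-shifted polynomial q(X) = p(X + b). (Analytic form of the Harsanyi interaction via the Taylor expansion of the network function at the fully masked baseline.) -/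
open Finset BigOperators MvPolynomial

private lemma aux_sum {α : Type*} [DecidableEq α] (m : Finset α) :
    ∑ U ∈ m.powerset, (-1 : ℝ) ^ (m.card - U.card) = if m = ∅ then 1 else 0 := by
  have h : ∑ U ∈ m.powerset, (-1 : ℝ) ^ (m.card - U.card)
      = ∑ U ∈ m.powerset, (-1 : ℝ) ^ U.card := by
    refine Finset.sum_nbij' (fun U => m \ U) (fun U => m \ U) ?_ ?_ ?_ ?_ ?_
    · intro U hU; exact Finset.mem_powerset.mpr (Finset.sdiff_subset)
    · intro U hU; exact Finset.mem_powerset.mpr (Finset.sdiff_subset)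
    · intro U hU; exact Finset.sdiff_sdiff_eq_self (Finset.mem_powerset.mp hU)
    · intro U hU; exact Finset.sdiff_sdiff_eq_self (Finset.mem_powerset.mp hU)
    · intro U hU
      rw [Finset.card_sdiff_of_subset (Finset.mem_powerset.mp hU)]
  rw [h]
  have := Finset.sum_powerset_neg_one_pow_card (x := m)
  have h2 : ((∑ U ∈ m.powerset, (-1 : ℤ) ^ U.card : ℤ) : ℝ)
      = ∑ U ∈ m.powerset, (-1 : ℝ) ^ U.card := by push_cast; rfl
  rw [← h2, this]
  split_ifs <;> simp

private lemma aux_ind {α : Type*} [DecidableEq α] (A T : Finset α) :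
    ∑ S ∈ T.powerset, (-1 : ℝ) ^ (T.card - S.card) * (if A ⊆ S then 1 else 0)
      = if A = T then 1 else 0 := by
  by_cases hsub : A ⊆ T
  · have h1 : ∑ S ∈ T.powerset, (-1 : ℝ) ^ (T.card - S.card) * (if A ⊆ S then 1 else 0)
        = ∑ S ∈ T.powerset.filter (fun S => A ⊆ S), (-1 : ℝ) ^ (T.card - S.card) := by
      rw [Finset.sum_filter]
      refine Finset.sum_congr rfl fun S _ => ?_
      by_cases h : A ⊆ S <;> simp [h]
    have h2 : ∑ S ∈ T.powerset.filter (fun S => A ⊆ S), (-1 : ℝ) ^ (T.card - S.card)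
        = ∑ U ∈ (T \ A).powerset, (-1 : ℝ) ^ ((T \ A).card - U.card) := by
      refine Finset.sum_nbij' (fun S => S \ A) (fun U => A ∪ U) ?_ ?_ ?_ ?_ ?_
      · intro S hS
        simp only [Finset.mem_filter, Finset.mem_powerset] at hS
        exact Finset.mem_powerset.mpr (Finset.sdiff_subset_sdiff hS.1 le_rfl)
      · intro U hU
        simp only [Finset.mem_powerset] at hU
        simp only [Finset.mem_filter, Finset.mem_powerset]
        exact ⟨Finset.union_subset hsub (hU.trans Finset.sdiff_subset), Finset.subset_union_left⟩
      · intro S hS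
        simp only [Finset.mem_filter, Finset.mem_powerset] at hS
        exact Finset.union_sdiff_of_subset hS.2
      · intro U hU
        simp only [Finset.mem_powerset] at hU
        have hd : Disjoint A U := (Finset.sdiff_disjoint.mono_left hU).symm
        simpa using Finset.union_sdiff_cancel_left hd
      · intro S hS
        simp only [Finset.mem_filter, Finset.mem_powerset] at hS
        congr 1
        rw [Finset.card_sdiff_of_subset hS.2, Finset.card_sdiff_of_subset hsub]
        have h1 := Finset.card_le_card hS.1
        have h2 := Finset.card_le_card hS.2
        have h3 := Finset.card_le_card hsub
        omega
    rw [h1, h2, aux_sum]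
    have : (T \ A = ∅) ↔ (A = T) := by
      rw [Finset.sdiff_eq_empty_iff_subset]
      exact ⟨fun h => Finset.Subset.antisymm hsub h, fun h => h.ge⟩
    simp only [this]
  · rw [if_neg fun h => hsub (by rw [h])]
    refine Finset.sum_eq_zero fun S hS => ?_
    have : ¬ A ⊆ S := fun h => hsub (h.trans (Finset.mem_powerset.mp hS))
    simp [this]

/-- Analytic form of the Harsanyi AND interaction via the Taylor expansion of the
network function (a polynomial `p`) at the fully masked baseline `b`:
`I_and(T) = ∑_{d : support(d) = T} q_d ∏_{i ∈ T} (x̂_i − b_i)^{d_i}`, where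
`q(X) = p(X + b)`. -/
theorem iand_analytic_form (n : ℕ) (p : MvPolynomial (Fin n) ℝ)
    (b xhat : Fin n → ℝ) :
    let mask : Finset (Fin n) → Fin n → ℝ :=
      fun S i => if i ∈ S then xhat i else b i
    let v : Finset (Fin n) → ℝ := fun S => eval (mask S) p
    let Iand : Finset (Fin n) → ℝ :=
      fun S => ∑ T ∈ S.powerset, (-1 : ℝ) ^ (S.card - T.card) * v T
    let q : MvPolynomial (Fin n) ℝ := bind₁ (fun i => X i + C (b i)) p
    ∀ T : Finset (Fin n),
      Iand T = ∑ d ∈ q.support.filter (fun d => d.support = T),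
        q.coeff d * ∏ i ∈ T, (xhat i - b i) ^ d i := by
  intro mask v Iand q T
  classical
  have hv : ∀ S : Finset (Fin n),
      v S = ∑ d ∈ q.support, q.coeff d *
        (if d.support ⊆ S then ∏ i ∈ d.support, (xhat i - b i) ^ d i else 0) := by
    intro S
    have h1 : eval (fun i => mask S i - b i) q = eval (mask S) p := by
      have := eval₂Hom_bind₁ (RingHom.id ℝ) (fun i => mask S i - b i)
        (fun i => X i + C (b i)) p
      simp only [eval₂Hom_X', eval₂Hom_C, RingHom.id_apply, map_add] at this
      show (eval₂Hom (RingHom.id ℝ) fun i => mask S i - b i) q = _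
      rw [this]
      simp only [sub_add_cancel]
      rfl
    show eval (mask S) p = _
    rw [← h1, eval_eq]
    refine Finset.sum_congr rfl fun d _ => ?_
    congr 1
    by_cases h : d.support ⊆ S
    · rw [if_pos h]
      refine Finset.prod_congr rfl fun i hi => ?_
      have hiS : i ∈ S := h hi
      simp [mask, hiS]
    · rw [if_neg h]
      obtain ⟨i, hi, hiS⟩ := Finset.not_subset.mp h
      refine Finset.prod_eq_zero hi ?_
      have hd : d i ≠ 0 := Finsupp.mem_support_iff.mp hi
      simp [mask, hiS, zero_pow hd]
  show (∑ S ∈ T.powerset, (-1 : ℝ) ^ (T.card - S.card) * v S) = _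
  calc ∑ S ∈ T.powerset, (-1 : ℝ) ^ (T.card - S.card) * v S
      = ∑ d ∈ q.support, (q.coeff d * ∏ i ∈ d.support, (xhat i - b i) ^ d i) *
          ∑ S ∈ T.powerset, (-1 : ℝ) ^ (T.card - S.card) *
            (if d.support ⊆ S then 1 else 0) := by
        simp only [hv, Finset.mul_sum]
        rw [Finset.sum_comm]
        refine Finset.sum_congr rfl fun d _ => ?_
        refine Finset.sum_congr rfl fun S _ => ?_
        by_cases h : d.support ⊆ S <;> simp [h] <;> ring_nf
    _ = ∑ d ∈ q.support, (q.coeff d * ∏ i ∈ d.support, (xhat i - b i) ^ d i) *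
          (if d.support = T then 1 else 0) := by
        refine Finset.sum_congr rfl fun d _ => ?_
        rw [aux_ind]
    _ = _ := by
        rw [Finset.sum_filter]
        refine Finset.sum_congr rfl fun d _ => ?_
        by_cases h : d.support = T
        · simp [h]
        · simp [h]
end

section
/- Recursive axiom: for every i ∈ N and every S ⊆ N∖{i}, I_and(S ∪ {i} | v) = I_i(S) − I_and(S | v), where I_i(S) := ∑_{L ⊆ S} (−1)^{|S|−|L|} v(L ∪ {i}) is the interaction effect of S computed with the variable i always present as a constant context. -/
open Finset BigOperators

/-- Recursive axiom: the interaction effect of `S ∪ {i}` equals the interaction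
effect of `S` computed with `i` always present, minus the interaction effect of `S`. -/
theorem iand_recursive {ι : Type*} [DecidableEq ι] (v : Finset ι → ℝ) (i : ι) :
    ∀ S : Finset ι, i ∉ S →
      Iand v (insert i S) =
        (∑ L ∈ S.powerset, (-1 : ℝ) ^ (S.card - L.card) * v (insert i L)) - Iand v S := by
  intro S hi
  unfold Iand
  rw [Finset.sum_powerset_insert hi, Finset.card_insert_of_notMem hi]
  have h1 : ∀ T ∈ S.powerset, (-1 : ℝ) ^ (S.card + 1 - T.card) * v T
      = -((-1 : ℝ) ^ (S.card - T.card) * v T) := by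
    intro T hT
    have hle : T.card ≤ S.card := Finset.card_le_card (Finset.mem_powerset.mp hT)
    rw [Nat.succ_sub hle, pow_succ]
    ring
  have h2 : ∀ T ∈ S.powerset, (-1 : ℝ) ^ (S.card + 1 - (insert i T).card) * v (insert i T)
      = (-1 : ℝ) ^ (S.card - T.card) * v (insert i T) := by
    intro T hT
    have hiT : i ∉ T := fun h => hi (Finset.mem_powerset.mp hT h)
    rw [Finset.card_insert_of_notMem hiT, Nat.succ_sub_succ]
  rw [Finset.sum_congr rfl h1, Finset.sum_congr rfl h2, Finset.sum_neg_distrib]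
  ring
end
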